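/- Let the compact set A and lower semicontinuous kernel K satisfy assumptions (A1)-(A4). For each N ≥ 2 choose a configuration ω_N ∈ A^N. If the functions x ↦ (1/N)·Σ_{y∈ω_N} K(x,y) − P(ω_N) converge to 0 in L¹(μ_eq) as N → ∞, then lim_{N→∞} P(ω_N) = W_K. -/

import Mathlib

/-!
Since the potential of `μeq` equals `W` on `A`, swapping sum and integral shows that the discrete
potential `D_N` of `ω_N` integrates to `W` against `μeq`. The polarization bounds `D_N` from below on
`A`, which carries `μeq`, so `P(ω_N) ≤ W`; and integrating `D_N - P(ω_N)` gives
`W - P(ω_N) ≤ ∫ (D_N - P(ω_N)) dμeq → 0`.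
-/

open MeasureTheory Filter Topology BoundedContinuousFunction NNReal ENNReal

noncomputable section

/-- The potential of a measure `μ` with respect to the kernel `K x y = f (nndist x y)`. -/
def potential {t : ℕ} (f : ℝ≥0 → ℝ≥0∞) (μ : Measure (EuclideanSpace ℝ (Fin t)))
    (x : EuclideanSpace ℝ (Fin t)) : ℝ≥0∞ :=
  ∫⁻ y, f (nndist x y) ∂μ

/-- The energy `I[μ] = ∫∫ K(x,y) dμ(x) dμ(y)`. -/
def energy {t : ℕ} (f : ℝ≥0 → ℝ≥0∞) (μ : Measure (EuclideanSpace ℝ (Fin t))) : ℝ≥0∞ :=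
  ∫⁻ x, potential f μ x ∂μ

/-- The normalized discrete potential `(1/N) ∑_{y ∈ ω} K(x,y)` of a configuration. -/
def discretePotential {t : ℕ} (f : ℝ≥0 → ℝ≥0∞) {N : ℕ}
    (ω : Fin N → EuclideanSpace ℝ (Fin t)) (x : EuclideanSpace ℝ (Fin t)) : ℝ≥0∞ :=
  (N : ℝ≥0∞)⁻¹ * ∑ i, f (nndist x (ω i))

/-- The polarization `P(ω) = min_{x ∈ A} (1/N) ∑_{y ∈ ω} K(x,y)` of a configuration. -/
def polarization {t : ℕ} (f : ℝ≥0 → ℝ≥0∞) (A : Set (EuclideanSpace ℝ (Fin t))) {N : ℕ}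
    (ω : Fin N → EuclideanSpace ℝ (Fin t)) : ℝ≥0∞ :=
  ⨅ x ∈ A, discretePotential f ω x

/-- The optimal `N`-point polarization `𝒫(A,N)`. -/
def maxPolarization {t : ℕ} (f : ℝ≥0 → ℝ≥0∞) (A : Set (EuclideanSpace ℝ (Fin t)))
    (N : ℕ) : ℝ≥0∞ :=
  ⨆ (ω : Fin N → EuclideanSpace ℝ (Fin t)) (_ : ∀ i, ω i ∈ A), polarization f A ω

/-- The normalized counting measure of a configuration. -/
def countingMeasure {t : ℕ} {N : ℕ} (ω : Fin N → EuclideanSpace ℝ (Fin t)) :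
    Measure (EuclideanSpace ℝ (Fin t)) :=
  (N : ℝ≥0∞)⁻¹ • ∑ i, Measure.dirac (ω i)

/-- Weak convergence of a sequence of measures: integrals of every bounded continuous
function converge. -/
def WeaklyTendsto {t : ℕ} (ν : ℕ → Measure (EuclideanSpace ℝ (Fin t)))
    (μ : Measure (EuclideanSpace ℝ (Fin t))) : Prop :=
  ∀ g : EuclideanSpace ℝ (Fin t) →ᵇ ℝ,
    Tendsto (fun N => ∫ x, g x ∂(ν N)) atTop (𝓝 (∫ x, g x ∂μ))

namespace ENNReal

theorem tendsto_of_le_of_tsub_le {α : Type*} {l : Filter α} {a ε : α → ℝ≥0∞} {w : ℝ≥0∞}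
    (hle : ∀ᶠ n in l, a n ≤ w) (hsub : ∀ᶠ n in l, w - a n ≤ ε n) (hε : Tendsto ε l (𝓝 0)) :
    Tendsto a l (𝓝 w) := by
  have hlower : Tendsto (fun n => w - ε n) l (𝓝 w) := by
    simpa using ENNReal.Tendsto.sub tendsto_const_nhds hε (Or.inr zero_ne_top)
  refine tendsto_of_tendsto_of_tendsto_of_le_of_le' hlower tendsto_const_nhds ?_ hle
  filter_upwards [hsub] with n hn using tsub_le_iff_tsub_le.mp hn

end ENNReal

theorem tsub_le_lintegral_tsub_const {α : Type*} [MeasurableSpace α] {μ : Measure α}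
    [IsProbabilityMeasure μ] (g : α → ℝ≥0∞) (c : ℝ≥0∞) :
    ∫⁻ x, g x ∂μ - c ≤ ∫⁻ x, (g x - c) ∂μ := by
  rw [tsub_le_iff_right]
  calc ∫⁻ x, g x ∂μ ≤ ∫⁻ x, (g x - c + c) ∂μ := lintegral_mono fun x => le_tsub_add
    _ = ∫⁻ x, (g x - c) ∂μ + c := by
      rw [lintegral_add_right' _ aemeasurable_const, lintegral_const, measure_univ, mul_one]

section DiscretePotential

variable {t N : ℕ} {f : ℝ≥0 → ℝ≥0∞} {μ : Measure (EuclideanSpace ℝ (Fin t))}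
  {ω : Fin N → EuclideanSpace ℝ (Fin t)}

theorem lintegral_discretePotential (hf : Measurable f) :
    ∫⁻ x, discretePotential f ω x ∂μ = (N : ℝ≥0∞)⁻¹ * ∑ i, potential f μ (ω i) := by
  have hker : ∀ y, Measurable fun x : EuclideanSpace ℝ (Fin t) => f (nndist x y) :=
    fun y => hf.comp (continuous_id.nndist continuous_const).measurable
  simp only [discretePotential, potential, nndist_comm (ω _)]
  rw [lintegral_const_mul _ (Finset.measurable_sum _ fun i _ => hker (ω i)),
    lintegral_finsetSum _ fun i _ => hker (ω i)]

theorem lintegral_discretePotential_of_potential_eq (hf : Measurable f) (hN : N ≠ 0)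
    {W : ℝ≥0∞} (hpot : ∀ i, potential f μ (ω i) = W) :
    ∫⁻ x, discretePotential f ω x ∂μ = W := by
  have hN' : (N : ℝ≥0∞) ≠ 0 := Nat.cast_ne_zero.mpr hN
  rw [lintegral_discretePotential hf, Finset.sum_congr rfl fun i _ => hpot i, Finset.sum_const,
    Finset.card_univ, Fintype.card_fin, nsmul_eq_mul, ← mul_assoc,
    ENNReal.inv_mul_cancel hN' (natCast_ne_top N), one_mul]

theorem polarization_le_lintegral_discretePotential [IsProbabilityMeasure μ]
    {A : Set (EuclideanSpace ℝ (Fin t))} (hμA : μ Aᶜ = 0) :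
    polarization f A ω ≤ ∫⁻ x, discretePotential f ω x ∂μ := by
  calc polarization f A ω = ∫⁻ _, polarization f A ω ∂μ := by
        rw [lintegral_const, measure_univ, mul_one]
    _ ≤ ∫⁻ x, discretePotential f ω x ∂μ := by
      refine lintegral_mono_ae ?_
      filter_upwards [measure_eq_zero_iff_ae_notMem.mp hμA] with x hx
      exact biInf_le _ (not_not.mp hx)

end DiscretePotential

theorem L1_convergence_implies_polarization_limit_general
    {t : ℕ} (A : Set (EuclideanSpace ℝ (Fin t)))
    (f : ℝ≥0 → ℝ≥0∞) (hf : LowerSemicontinuous f)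
    (μeq : Measure (EuclideanSpace ℝ (Fin t))) (hμeq : IsProbabilityMeasure μeq)
    (hμeqA : μeq Aᶜ = 0)
    (W : ℝ≥0∞) (hA4 : ∀ x ∈ A, potential f μeq x = W)
    (ω : (N : ℕ) → Fin N → EuclideanSpace ℝ (Fin t)) (hω : ∀ N, ∀ i, ω N i ∈ A)
    (hL1 : Tendsto (fun N => ∫⁻ x, (discretePotential f (ω N) x - polarization f A (ω N)) ∂μeq)
      atTop (𝓝 0)) :
    Tendsto (fun N => polarization f A (ω N)) atTop (𝓝 W) := by
  have hint : ∀ᶠ N in atTop, ∫⁻ x, discretePotential f (ω N) x ∂μeq = W := by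
    filter_upwards [eventually_ne_atTop 0] with N hN
    exact lintegral_discretePotential_of_potential_eq hf.measurable hN
      fun i => hA4 _ (hω N i)
  refine ENNReal.tendsto_of_le_of_tsub_le ?_ ?_ hL1
  · filter_upwards [hint] with N hN
    exact hN ▸ polarization_le_lintegral_discretePotential hμeqA
  · filter_upwards [hint] with N hN
    exact hN ▸ tsub_le_lintegral_tsub_const _ _

theorem L1_convergence_implies_polarization_limit
    {t : ℕ} (A : Set (EuclideanSpace ℝ (Fin t))) (hA : IsCompact A)
    (f : ℝ≥0 → ℝ≥0∞) (hf : LowerSemicontinuous f)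
    (μeq : Measure (EuclideanSpace ℝ (Fin t))) (hμeq : IsProbabilityMeasure μeq)
    (hμeqA : μeq Aᶜ = 0)
    (hA1 : ∃ μ : Measure (EuclideanSpace ℝ (Fin t)),
      IsProbabilityMeasure μ ∧ μ Aᶜ = 0 ∧ energy f μ < ⊤)
    (hA2min : ∀ ν : Measure (EuclideanSpace ℝ (Fin t)),
      IsProbabilityMeasure ν → ν Aᶜ = 0 → energy f μeq ≤ energy f ν)
    (hA2uniq : ∀ ν : Measure (EuclideanSpace ℝ (Fin t)),
      IsProbabilityMeasure ν → ν Aᶜ = 0 → energy f ν = energy f μeq → ν = μeq)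
    (hA3 : ∀ x ∈ A, ∀ U : Set (EuclideanSpace ℝ (Fin t)), IsOpen U → x ∈ U → 0 < μeq U)
    (W : ℝ≥0∞) (hW : 0 < W) (hA4 : ∀ x ∈ A, potential f μeq x = W)
    (ω : (N : ℕ) → Fin N → EuclideanSpace ℝ (Fin t)) (hω : ∀ N, ∀ i, ω N i ∈ A)
    (hL1 : Tendsto (fun N => ∫⁻ x, (discretePotential f (ω N) x - polarization f A (ω N)) ∂μeq)
      atTop (𝓝 0)) :
    Tendsto (fun N => polarization f A (ω N)) atTop (𝓝 W) :=
  L1_convergence_implies_polarization_limit_general A f hf μeq hμeq hμeqA W hA4 ω hω hL1
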